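/- arXiv:2305.15792 — 2 statements merged into one kernel-verified Lean document; each statement's English description precedes it below -/
import Mathlib

section
/- If the approximation error E_{p(z,d)} KL[p(y|z,d) ∥ q_d(y|z,d)] is zero, then the estimator Î(Y,D|Z) = E_{p(z)} E_{p(y,d|z)}[log q_d(y|z,d) − log q(y|z)] is an upper bound on the true conditional mutual information I(Y,D|Z). -/
/-- Gibbs' inequality (finite form). -/
lemma gibbs_aux {Y : Type*} [Fintype Y] (r s : Y → ℝ)
    (hr : ∀ y, 0 < r y) (hs : ∀ y, 0 < s y)
    (h : ∑ y, s y ≤ ∑ y, r y) :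
    0 ≤ ∑ y, r y * Real.log (r y / s y) := by
  have key : ∑ y, r y * Real.log (s y / r y) ≤ ∑ y, (s y - r y) := by
    apply Finset.sum_le_sum
    intro y _
    have hpos : 0 < s y / r y := div_pos (hs y) (hr y)
    have hlog := Real.log_le_sub_one_of_pos hpos
    have := mul_le_mul_of_nonneg_left hlog (le_of_lt (hr y))
    calc r y * Real.log (s y / r y) ≤ r y * (s y / r y - 1) := this
      _ = s y - r y := by
        rw [mul_comm, sub_mul, one_mul, div_mul_cancel₀ _ (ne_of_gt (hr y))]
  have hsum : ∑ y, (s y - r y) ≤ 0 := by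
    rw [Finset.sum_sub_distrib]
    linarith
  have hneg : ∑ y, r y * Real.log (r y / s y)
      = - ∑ y, r y * Real.log (s y / r y) := by
    rw [← Finset.sum_neg_distrib]
    apply Finset.sum_congr rfl
    intro y _
    rw [Real.log_div (ne_of_gt (hr y)) (ne_of_gt (hs y)),
        Real.log_div (ne_of_gt (hs y)) (ne_of_gt (hr y))]
    ring
  rw [hneg]
  linarith

/-- if the approximation error E_{p(z,d)} KL[p(y|z,d) ∥ q_d(y|z,d)] is zero,
    then Î(Y,D|Z) is an upper bound on I(Y,D|Z). -/
theorem variational_cmi_upper_bound {Y D Z : Type*} [Fintype Y] [Fintype D] [Fintype Z]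
    (p : Y → D → Z → ℝ) (q : Y → Z → ℝ) (qd : Y → Z → D → ℝ)
    (hp : ∀ y d z, 0 < p y d z)
    (hpsum : ∑ y, ∑ d, ∑ z, p y d z = 1)
    (hq : ∀ y z, 0 < q y z) (hqsum : ∀ z, ∑ y, q y z = 1)
    (hqd : ∀ y z d, 0 < qd y z d) (hqdsum : ∀ z d, ∑ y, qd y z d = 1)
    (herr : (∑ z, ∑ d, ∑ y, p y d z *
        Real.log ((p y d z / (∑ y', p y' d z)) / qd y z d)) = 0) :
    (∑ z, ∑ d, ∑ y, p y d z *
        (Real.log (p y d z / (∑ y', p y' d z))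
          - Real.log ((∑ d', p y d' z) / (∑ y', ∑ d', p y' d' z))))
      ≤ ∑ z, ∑ d, ∑ y, p y d z * (Real.log (qd y z d) - Real.log (q y z)) := by
  classical
  rcases isEmpty_or_nonempty Y with hY | hY
  · simp
  rcases isEmpty_or_nonempty D with hD | hD
  · simp
  have hpd : ∀ d z, 0 < ∑ y', p y' d z := fun d z =>
    Finset.sum_pos (fun y _ => hp y d z) Finset.univ_nonempty
  have hpyz : ∀ y z, 0 < ∑ d', p y d' z := fun y z =>
    Finset.sum_pos (fun d _ => hp y d z) Finset.univ_nonempty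
  have hpz : ∀ z, 0 < ∑ y', ∑ d', p y' d' z := fun z =>
    Finset.sum_pos (fun y _ => hpyz y z) Finset.univ_nonempty
  -- the extra nonnegative term
  set S : ℝ := ∑ z, ∑ d, ∑ y, p y d z *
      (Real.log ((∑ d', p y d' z) / (∑ y', ∑ d', p y' d' z)) - Real.log (q y z)) with hS
  have hSnn : 0 ≤ S := by
    rw [hS]
    apply Finset.sum_nonneg
    intro z _
    have hswap : (∑ d, ∑ y, p y d z *
        (Real.log ((∑ d', p y d' z) / (∑ y', ∑ d', p y' d' z)) - Real.log (q y z)))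
        = ∑ y, (∑ d', p y d' z) *
        (Real.log ((∑ d', p y d' z) / (∑ y', ∑ d', p y' d' z)) - Real.log (q y z)) := by
      rw [Finset.sum_comm]
      apply Finset.sum_congr rfl
      intro y _
      rw [← Finset.sum_mul]
    rw [hswap]
    have := gibbs_aux (fun y => ∑ d', p y d' z)
      (fun y => (∑ y', ∑ d', p y' d' z) * q y z)
      (fun y => hpyz y z)
      (fun y => mul_pos (hpz z) (hq y z))
      (by rw [← Finset.mul_sum, hqsum z, mul_one])
    refine le_trans this (le_of_eq ?_)
    apply Finset.sum_congr rfl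
    intro y _
    congr 1
    rw [Real.log_div (ne_of_gt (hpyz y z)) (ne_of_gt (mul_pos (hpz z) (hq y z))),
        Real.log_mul (ne_of_gt (hpz z)) (ne_of_gt (hq y z)),
        Real.log_div (ne_of_gt (hpyz y z)) (ne_of_gt (hpz z))]
    ring
  -- decompose RHS
  have hdecomp : (∑ z, ∑ d, ∑ y, p y d z * (Real.log (qd y z d) - Real.log (q y z)))
      = (∑ z, ∑ d, ∑ y, p y d z *
        (Real.log (p y d z / (∑ y', p y' d z))
          - Real.log ((∑ d', p y d' z) / (∑ y', ∑ d', p y' d' z))))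
        - (∑ z, ∑ d, ∑ y, p y d z *
        Real.log ((p y d z / (∑ y', p y' d z)) / qd y z d))
        + S := by
    rw [hS]
    rw [← Finset.sum_sub_distrib, ← Finset.sum_add_distrib]
    apply Finset.sum_congr rfl
    intro z _
    rw [← Finset.sum_sub_distrib, ← Finset.sum_add_distrib]
    apply Finset.sum_congr rfl
    intro d _
    rw [← Finset.sum_sub_distrib, ← Finset.sum_add_distrib]
    apply Finset.sum_congr rfl
    intro y _
    have h1 : Real.log ((p y d z / (∑ y', p y' d z)) / qd y z d)
        = Real.log (p y d z / (∑ y', p y' d z)) - Real.log (qd y z d) := by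
      rw [Real.log_div (ne_of_gt (div_pos (hp y d z) (hpd d z))) (ne_of_gt (hqd y z d))]
    rw [h1]
    ring
  rw [hdecomp, herr]
  linarith
end

section
/- For finite random variables Y, D, Z and any everywhere-positive variational conditional distributions q, q_d, the absolute error of the estimator satisfies |Î(Y,D|Z) − I(Y,D|Z)| ≤ E_{p(z)} KL[p(y|z) ∥ q(y|z)] + E_{p(z,d)} KL[p(y|z,d) ∥ q_d(y|z,d)]. -/
open Finset

/-- Gibbs' inequality for unnormalized weights. -/
lemma gibbs_aux_s2 {Y : Type*} [Fintype Y] (a b : Y → ℝ)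
    (ha : ∀ y, 0 < a y) (hb : ∀ y, 0 < b y) (hbsum : ∑ y, b y = 1) :
    0 ≤ ∑ y, a y * Real.log ((a y / ∑ y', a y') / b y) := by
  rcases isEmpty_or_nonempty Y with h | h
  · simp at hbsum
  have hS : 0 < ∑ y', a y' := Finset.sum_pos (fun y _ => ha y) Finset.univ_nonempty
  have key : ∑ y, a y * Real.log ((∑ y', a y') * b y / a y) ≤ 0 := by
    calc ∑ y, a y * Real.log ((∑ y', a y') * b y / a y)
        ≤ ∑ y, a y * ((∑ y', a y') * b y / a y - 1) := by
          apply Finset.sum_le_sum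
          intro y _
          have hx : 0 < (∑ y', a y') * b y / a y := by
            have := ha y; have := hb y; positivity
          exact mul_le_mul_of_nonneg_left (Real.log_le_sub_one_of_pos hx) (ha y).le
      _ = ∑ y, ((∑ y', a y') * b y - a y) := by
          apply Finset.sum_congr rfl; intro y _
          have := (ha y).ne'
          field_simp
      _ = 0 := by
          rw [Finset.sum_sub_distrib, ← Finset.mul_sum, hbsum]; ring
  have heq : ∀ y, Real.log ((a y / ∑ y', a y') / b y)
      = - Real.log ((∑ y', a y') * b y / a y) := by
    intro y
    rw [← Real.log_inv]
    congr 1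
    have := (ha y).ne'; have := (hb y).ne'; have := hS.ne'
    field_simp
  have : ∑ y, a y * Real.log ((a y / ∑ y', a y') / b y)
      = - ∑ y, a y * Real.log ((∑ y', a y') * b y / a y) := by
    rw [← Finset.sum_neg_distrib]
    apply Finset.sum_congr rfl
    intro y _
    rw [heq]; ring
  rw [this]
  linarith

/-- |Î(Y,D|Z) − I(Y,D|Z)| ≤ E_{p(z)} KL[p(y|z) ∥ q(y|z)]
    + E_{p(z,d)} KL[p(y|z,d) ∥ q_d(y|z,d)]. -/
theorem variational_cmi_abs_error {Y D Z : Type*} [Fintype Y] [Fintype D] [Fintype Z]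
    (p : Y → D → Z → ℝ) (q : Y → Z → ℝ) (qd : Y → Z → D → ℝ)
    (hp : ∀ y d z, 0 < p y d z)
    (hpsum : ∑ y, ∑ d, ∑ z, p y d z = 1)
    (hq : ∀ y z, 0 < q y z) (hqsum : ∀ z, ∑ y, q y z = 1)
    (hqd : ∀ y z d, 0 < qd y z d) (hqdsum : ∀ z d, ∑ y, qd y z d = 1) :
    |(∑ z, ∑ d, ∑ y, p y d z * (Real.log (qd y z d) - Real.log (q y z)))
        - (∑ z, ∑ d, ∑ y, p y d z *
            (Real.log (p y d z / (∑ y', p y' d z))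
              - Real.log ((∑ d', p y d' z) / (∑ y', ∑ d', p y' d' z))))|
      ≤ (∑ z, ∑ y, (∑ d, p y d z) *
            Real.log (((∑ d, p y d z) / (∑ y', ∑ d', p y' d' z)) / q y z))
        + (∑ z, ∑ d, ∑ y, p y d z *
            Real.log ((p y d z / (∑ y', p y' d z)) / qd y z d)) := by
  rcases isEmpty_or_nonempty Y with hY | hY
  · simp at hpsum
  rcases isEmpty_or_nonempty D with hD | hD
  · simp at hpsum
  set KL1 := (∑ z, ∑ y, (∑ d, p y d z) *
      Real.log (((∑ d, p y d z) / (∑ y', ∑ d', p y' d' z)) / q y z)) with hK1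
  set KL2 := (∑ z, ∑ d, ∑ y, p y d z *
      Real.log ((p y d z / (∑ y', p y' d z)) / qd y z d)) with hK2
  have hKL1nn : 0 ≤ KL1 := by
    rw [hK1]
    apply Finset.sum_nonneg
    intro z _
    exact gibbs_aux_s2 (fun y => ∑ d, p y d z) (fun y => q y z)
      (fun y => Finset.sum_pos (fun d _ => hp y d z) Finset.univ_nonempty)
      (fun y => hq y z) (hqsum z)
  have hKL2nn : 0 ≤ KL2 := by
    rw [hK2]
    apply Finset.sum_nonneg
    intro z _
    apply Finset.sum_nonneg
    intro d _
    exact gibbs_aux_s2 (fun y => p y d z) (fun y => qd y z d)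
      (fun y => hp y d z) (fun y => hqd y z d) (hqdsum z d)
  have hK1eq : KL1 = ∑ z, ∑ d, ∑ y, p y d z *
      Real.log (((∑ d', p y d' z) / (∑ y', ∑ d', p y' d' z)) / q y z) := by
    rw [hK1]
    apply Finset.sum_congr rfl
    intro z _
    calc ∑ y, (∑ d, p y d z) *
          Real.log (((∑ d, p y d z) / (∑ y', ∑ d', p y' d' z)) / q y z)
        = ∑ y, ∑ d, p y d z *
            Real.log (((∑ d', p y d' z) / (∑ y', ∑ d', p y' d' z)) / q y z) :=
          Finset.sum_congr rfl (fun y _ => by rw [Finset.sum_mul])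
      _ = ∑ d, ∑ y, p y d z *
            Real.log (((∑ d', p y d' z) / (∑ y', ∑ d', p y' d' z)) / q y z) :=
          Finset.sum_comm
  have hdiff : (∑ z, ∑ d, ∑ y, p y d z * (Real.log (qd y z d) - Real.log (q y z)))
      - (∑ z, ∑ d, ∑ y, p y d z *
          (Real.log (p y d z / (∑ y', p y' d z))
            - Real.log ((∑ d', p y d' z) / (∑ y', ∑ d', p y' d' z))))
      = KL1 - KL2 := by
    rw [hK1eq, hK2]
    rw [← Finset.sum_sub_distrib, ← Finset.sum_sub_distrib]
    apply Finset.sum_congr rfl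
    intro z _
    rw [← Finset.sum_sub_distrib, ← Finset.sum_sub_distrib]
    apply Finset.sum_congr rfl
    intro d _
    rw [← Finset.sum_sub_distrib, ← Finset.sum_sub_distrib]
    apply Finset.sum_congr rfl
    intro y _
    have hpd : 0 < ∑ y', p y' d z := Finset.sum_pos (fun y' _ => hp y' d z) Finset.univ_nonempty
    have hpy : 0 < ∑ d', p y d' z := Finset.sum_pos (fun d' _ => hp y d' z) Finset.univ_nonempty
    have hpz : 0 < ∑ y', ∑ d', p y' d' z :=
      Finset.sum_pos (fun y' _ => Finset.sum_pos (fun d' _ => hp y' d' z) Finset.univ_nonempty)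
        Finset.univ_nonempty
    have hB : (0:ℝ) < (∑ d', p y d' z) / (∑ y', ∑ d', p y' d' z) := by positivity
    have hA : (0:ℝ) < p y d z / (∑ y', p y' d z) := by
      have := hp y d z; positivity
    rw [Real.log_div hB.ne' (hq y z).ne', Real.log_div hA.ne' (hqd y z d).ne']
    ring
  rw [hdiff, abs_sub_le_iff]
  constructor <;> linarith
end
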